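/- Let T : F → H be a continuous linear operator between separable Hilbert spaces whose image is dense in H, and let V be a Banach space compactly embedded in H. Then for every ε > 0 there exists a continuous linear operator T_ε : H → F with finite-dimensional range such that ‖T(T_ε h) − h‖_H ≤ ε ‖h‖_V for all h ∈ V. -/

import Mathlib

/-!
Compactness of `ι` puts the image of the unit ball within `ε / 2` of a finite-dimensional
subspace `G` of `H` (a finite net of the compact set, rescaled). On the finite-dimensional `G`,
density of the range of `T` gives an operator `L : G → F` with `T ∘ L` close to the inclusion
(choose approximate preimages of a basis), and `Tε := L ∘ P_G`, with `P_G` the orthogonal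
projection, does the job.
-/

open Submodule

theorem DenseRange.exists_norm_comp_sub_le {𝕜 E F H : Type*} [NontriviallyNormedField 𝕜]
    [CompleteSpace 𝕜] [NormedAddCommGroup E] [NormedSpace 𝕜 E] [FiniteDimensional 𝕜 E]
    [NormedAddCommGroup F] [NormedSpace 𝕜 F] [NormedAddCommGroup H] [NormedSpace 𝕜 H]
    {T : F →L[𝕜] H} (hT : DenseRange T) (j : E →L[𝕜] H) {δ : ℝ} (hδ : 0 < δ) :
    ∃ L : E →L[𝕜] F, ‖T.comp L - j‖ ≤ δ := by
  let b := Module.finBasis 𝕜 E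
  obtain ⟨C, hC, hbound⟩ := b.exists_opNorm_le (F := H)
  have hpreimage (i) : ∃ f : F, dist (T f) (j (b i)) < δ / C :=
    (hT.exists_dist_lt (j (b i)) (div_pos hδ hC)).imp fun _ h => by rwa [dist_comm]
  choose f hf using hpreimage
  refine ⟨b.constrL f, ?_⟩
  calc ‖T.comp (b.constrL f) - j‖ ≤ C * (δ / C) :=
        hbound (by positivity) fun i => by simpa [← dist_eq_norm] using (hf i).le
    _ = δ := mul_div_cancel₀ δ hC.ne'

theorem Submodule.norm_sub_starProjection_le {𝕜 E : Type*} [RCLike 𝕜] [NormedAddCommGroup E]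
    [InnerProductSpace 𝕜 E] (K : Submodule 𝕜 E) [K.HasOrthogonalProjection] (x : E) {y : E}
    (hy : y ∈ K) : ‖x - K.starProjection x‖ ≤ ‖x - y‖ := by
  rw [starProjection_minimal]
  exact ciInf_le ⟨0, by rintro _ ⟨z, rfl⟩; positivity⟩ (⟨y, hy⟩ : K)

theorem IsCompactOperator.exists_finiteDimensional_norm_sub_le {𝕜 V H : Type*}
    [RCLike 𝕜] [NormedAddCommGroup V] [NormedSpace 𝕜 V] [NormedAddCommGroup H] [NormedSpace 𝕜 H]
    {f : V →ₗ[𝕜] H} (hf : IsCompactOperator f) {ε : ℝ} (hε : 0 < ε) :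
    ∃ G : Submodule 𝕜 H, FiniteDimensional 𝕜 G ∧ ∀ v, ∃ g ∈ G, ‖f v - g‖ ≤ ε * ‖v‖ := by
  obtain ⟨K, hK, hKnhds⟩ := hf
  obtain ⟨δ, hδ, hball⟩ := Metric.mem_nhds_iff.mp hKnhds
  obtain ⟨s, hs, hnet⟩ :=
    Metric.totallyBounded_iff.mp hK.totallyBounded (ε * δ / 2) (by positivity)
  have := FiniteDimensional.span_of_finite 𝕜 hs
  refine ⟨span 𝕜 s, inferInstance, fun v => ?_⟩
  rcases eq_or_ne v 0 with rfl | hv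
  · exact ⟨0, zero_mem _, by simp⟩
  -- approximate `f (c • v)`, which lies in `K` since `‖c • v‖ = δ / 2`, and scale back
  have hv' : 0 < ‖v‖ := norm_pos_iff.mpr hv
  set c : ℝ := δ / (2 * ‖v‖) with hc_def
  have hc : 0 < c := by positivity
  have hcv : ‖(c : 𝕜) • v‖ = δ / 2 := by
    rw [norm_smul, RCLike.norm_ofReal, abs_of_pos hc, hc_def]
    field_simp
  obtain ⟨y, hys, hy⟩ := Set.mem_iUnion₂.mp <| hnet <| hball <| by
    rw [Metric.mem_ball, dist_zero_right, hcv]; linarith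
  refine ⟨(c : 𝕜)⁻¹ • y, smul_mem _ _ (subset_span hys), ?_⟩
  have hscale : f v - (c : 𝕜)⁻¹ • y = (c : 𝕜)⁻¹ • (f ((c : 𝕜) • v) - y) := by
    rw [smul_sub, map_smul, smul_smul, inv_mul_cancel₀ (by exact_mod_cast hc.ne'), one_smul]
  rw [Metric.mem_ball, dist_eq_norm] at hy
  calc ‖f v - (c : 𝕜)⁻¹ • y‖ = c⁻¹ * ‖f ((c : 𝕜) • v) - y‖ := by
        rw [hscale, norm_smul, norm_inv, RCLike.norm_ofReal, abs_of_pos hc]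
    _ ≤ c⁻¹ * (ε * δ / 2) := by gcongr
    _ = ε * ‖v‖ := by rw [hc_def]; field_simp

theorem DenseRange.exists_finiteDimensional_range_norm_apply_sub_le {𝕜 F H : Type*}
    [RCLike 𝕜] [NormedAddCommGroup F] [NormedSpace 𝕜 F]
    [NormedAddCommGroup H] [InnerProductSpace 𝕜 H]
    {T : F →L[𝕜] H} (hT : DenseRange T) (G : Submodule 𝕜 H) [FiniteDimensional 𝕜 G]
    {δ : ℝ} (hδ : 0 < δ) :
    ∃ S : H →L[𝕜] F, FiniteDimensional 𝕜 (LinearMap.range (S : H →ₗ[𝕜] F)) ∧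
      ∀ h, ∀ g ∈ G, ‖T (S h) - h‖ ≤ δ * ‖h‖ + ‖h - g‖ := by
  obtain ⟨L, hL⟩ := hT.exists_norm_comp_sub_le G.subtypeL hδ
  refine ⟨L.comp G.orthogonalProjectionOnto,
    finiteDimensional_of_le (LinearMap.range_comp_le_range _ _), fun h g hg => ?_⟩
  set p := G.orthogonalProjectionOnto h
  have hsplit : T (L p) - h = (T.comp L - G.subtypeL) p + ((p : H) - h) := by simp
  calc ‖T (L p) - h‖ ≤ ‖(T.comp L - G.subtypeL) p‖ + ‖h - G.starProjection h‖ := by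
        rw [hsplit, norm_sub_rev]; exact norm_add_le _ _
    _ ≤ δ * ‖h‖ + ‖h - g‖ := by
        gcongr
        · exact (T.comp L - G.subtypeL).le_of_opNorm_le hL p |>.trans <| by
            gcongr; exact G.norm_orthogonalProjectionOnto_apply_le h
        · exact G.norm_sub_starProjection_le h hg

theorem stmt_0_general
    {F H V : Type*}
    [NormedAddCommGroup F] [InnerProductSpace ℝ F]
    [NormedAddCommGroup H] [InnerProductSpace ℝ H]
    [NormedAddCommGroup V] [NormedSpace ℝ V]
    (T : F →L[ℝ] H) (hT : DenseRange T)
    (ι : V →L[ℝ] H) (hι_cpt : IsCompactOperator ι) :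
    ∀ ε > 0, ∃ Tε : H →L[ℝ] F,
      FiniteDimensional ℝ (LinearMap.range (Tε : H →ₗ[ℝ] F)) ∧
      ∀ v : V, ‖T (Tε (ι v)) - ι v‖ ≤ ε * ‖v‖ := by
  intro ε hε
  obtain ⟨G, hG, hGapprox⟩ :=
    IsCompactOperator.exists_finiteDimensional_norm_sub_le (f := (ι : V →ₗ[ℝ] H)) hι_cpt
      (half_pos hε)
  obtain ⟨Tε, hrange, hTε⟩ := hT.exists_finiteDimensional_range_norm_apply_sub_le G
    (show 0 < ε / 2 / (‖ι‖ + 1) by positivity)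
  refine ⟨Tε, hrange, fun v => ?_⟩
  obtain ⟨g, hg, hgv⟩ := hGapprox v
  rw [ContinuousLinearMap.coe_coe] at hgv
  have hιv : ε / 2 / (‖ι‖ + 1) * ‖ι v‖ ≤ ε / 2 * ‖v‖ := by
    calc ε / 2 / (‖ι‖ + 1) * ‖ι v‖ ≤ ε / 2 / (‖ι‖ + 1) * ((‖ι‖ + 1) * ‖v‖) := by
          gcongr; exact ι.le_opNorm v |>.trans <| by gcongr; linarith
      _ = ε / 2 * ‖v‖ := by field_simp
  linarith [hTε (ι v) g hg]

/-- Approximate right inverse of a bounded linear operator with dense range. -/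
theorem stmt_0
    {F H V : Type*}
    [NormedAddCommGroup F] [InnerProductSpace ℝ F] [CompleteSpace F]
    [TopologicalSpace.SeparableSpace F]
    [NormedAddCommGroup H] [InnerProductSpace ℝ H] [CompleteSpace H]
    [TopologicalSpace.SeparableSpace H]
    [NormedAddCommGroup V] [NormedSpace ℝ V] [CompleteSpace V]
    (T : F →L[ℝ] H) (hT : DenseRange T)
    (ι : V →L[ℝ] H) (hι_inj : Function.Injective ι) (hι_cpt : IsCompactOperator ι) :
    ∀ ε > 0, ∃ Tε : H →L[ℝ] F,
      FiniteDimensional ℝ (LinearMap.range (Tε : H →ₗ[ℝ] F)) ∧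
      ∀ v : V, ‖T (Tε (ι v)) - ι v‖ ≤ ε * ‖v‖ :=
  stmt_0_general T hT ι hι_cpt
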